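/- arXiv:1710.05715 — 3 statements merged into one kernel-verified Lean document; each statement's English description precedes it below -/
import Mathlib

section
/- Let F be a finite nonempty universe, 𝒮 a finite family of subsets of F whose union is F, and w : 𝒮 → ℝ a positive weight function. Suppose the greedy algorithm selects sets P₁, …, P_k in order (at each step choosing a set minimizing w(P)/|P ∩ R| over sets P with P ∩ R ≠ ∅, where R is the current set of uncovered elements) until all of F is covered. Then for every subfamily C* ⊆ 𝒮 whose union is F, the total weight of the greedy selection satisfies Σ_{i=1}^{k} w(P_i) ≤ H(p) · Σ_{P ∈ C*} w(P), where p = max_{P ∈ 𝒮} |P| and H(p) = Σ_{j=1}^{p} 1/j is the p-th harmonic number. In other words, the greedy algorithm is an H(p)-approximation for weighted set cover. -/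
/-!
Charge the elements newly covered at greedy step `i` the price `cᵢ = w(Pᵢ)/|Pᵢ ∩ Rᵢ|`, so
that the greedy weight is the total charge. Every element lies in some `Q ∈ C`, and while `Q`
still has `a` uncovered elements the greedy choice gives `cᵢ ≤ w(Q)/a`; hence the elements of
`Q` are charged at most `w(Q) (1/|Q| + ⋯ + 1/1) ≤ w(Q) H(p)` in total.
-/

open Finset

theorem harmonic_mono : Monotone harmonic := fun _ _ h =>
  sum_le_sum_of_subset_of_nonneg (range_subset_range.2 h) fun _ _ _ => by positivity

theorem sub_div_le_harmonic_sub {a b : ℕ} (hba : b ≤ a) :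
    ((a : ℚ) - b) / a ≤ harmonic a - harmonic b := by
  calc ((a : ℚ) - b) / a = ∑ _j ∈ Ico b a, (a : ℚ)⁻¹ := by
        rw [sum_const, Nat.card_Ico, nsmul_eq_mul, Nat.cast_sub hba, div_eq_mul_inv]
    _ ≤ ∑ j ∈ Ico b a, ((j + 1 : ℕ) : ℚ)⁻¹ := by
        refine sum_le_sum fun j hj => inv_anti₀ (by positivity) ?_
        exact_mod_cast (mem_Ico.1 hj).2
    _ = harmonic a - harmonic b := sum_Ico_eq_sub _ hba

theorem sub_mul_le_mul_harmonic_sub {a b : ℕ} {c W : ℝ} (hba : b ≤ a) (hW : 0 ≤ W)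
    (hc : c * a ≤ W) : ((a : ℝ) - b) * c ≤ W * (harmonic a - harmonic b) := by
  obtain rfl | ha := Nat.eq_zero_or_pos a
  · simp [Nat.le_zero.1 hba]
  have hdiff : ((a : ℝ) - b) / a ≤ harmonic a - harmonic b := by
    simpa using (Rat.cast_le (K := ℝ)).2 (sub_div_le_harmonic_sub hba)
  have hab : 0 ≤ ((a : ℝ) - b) / a := div_nonneg (by simpa using hba) (by positivity)
  calc ((a : ℝ) - b) * c = ((a : ℝ) - b) / a * (c * a) := by field_simp
    _ ≤ ((a : ℝ) - b) / a * W := mul_le_mul_of_nonneg_left hc hab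
    _ ≤ W * (harmonic a - harmonic b) := by
        rw [mul_comm]; exact mul_le_mul_of_nonneg_left hdiff hW

theorem sum_sub_mul_le_mul_harmonic {k : ℕ} {a : ℕ → ℕ} {c : ℕ → ℝ} {W : ℝ} (hW : 0 ≤ W)
    (ha : ∀ i < k, a (i + 1) ≤ a i) (hc : ∀ i < k, c i * a i ≤ W) :
    ∑ i ∈ range k, ((a i : ℝ) - a (i + 1)) * c i ≤ W * harmonic (a 0) := by
  calc ∑ i ∈ range k, ((a i : ℝ) - a (i + 1)) * c i
      ≤ ∑ i ∈ range k, W * ((harmonic (a i) : ℝ) - harmonic (a (i + 1))) :=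
        sum_le_sum fun i hi =>
          sub_mul_le_mul_harmonic_sub (ha i (mem_range.1 hi)) hW (hc i (mem_range.1 hi))
    _ = W * (harmonic (a 0) - harmonic (a k)) := by
        rw [← mul_sum, sum_range_sub' (fun i => (harmonic (a i) : ℝ))]
    _ ≤ W * harmonic (a 0) := by
        have : (0 : ℝ) ≤ harmonic (a k) := by exact_mod_cast harmonic_mono (Nat.zero_le _)
        exact mul_le_mul_of_nonneg_left (sub_le_self _ this) hW

theorem card_le_sum_card_inter {α : Type*} [DecidableEq α] {C : Finset (Finset α)}
    {D : Finset α} (hD : ∀ x ∈ D, ∃ Q ∈ C, x ∈ Q) : #D ≤ ∑ Q ∈ C, #(Q ∩ D) := by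
  refine (card_le_card fun x hx => ?_).trans card_biUnion_le
  obtain ⟨Q, hQ, hxQ⟩ := hD x hx
  exact mem_biUnion.2 ⟨Q, hQ, mem_inter.2 ⟨hxQ, hx⟩⟩

theorem card_inter_sdiff_add_card_inter_inter {α : Type*} [DecidableEq α] (Q R P : Finset α) :
    #(Q ∩ (R \ P)) + #(Q ∩ (P ∩ R)) = #(Q ∩ R) := by
  rw [← card_sdiff_add_card_inter (Q ∩ R) P]
  congr 2 <;> ext <;> simp only [mem_inter, mem_sdiff] <;> tauto

section GreedyRun

variable {α : Type*} [DecidableEq α] {k : ℕ} {P R : ℕ → Finset α}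

theorem uncovered_subset_universe {F : Finset α} (hR0 : R 0 = F)
    (hRsucc : ∀ i < k, R (i + 1) = R i \ P i) : ∀ i ≤ k, R i ⊆ F
  | 0, _ => hR0.le
  | i + 1, hi =>
    (hRsucc i hi).trans_le (sdiff_subset.trans (uncovered_subset_universe hR0 hRsucc i (by omega)))

theorem sum_card_inter_mul_le_sum_sum {F : Finset α} {C : Finset (Finset α)} {c : ℕ → ℝ}
    (hRF : ∀ i ≤ k, R i ⊆ F) (hCcov : ∀ f ∈ F, ∃ Q ∈ C, f ∈ Q) (hc : ∀ i < k, 0 ≤ c i) :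
    ∑ i ∈ range k, #(P i ∩ R i) * c i ≤
      ∑ Q ∈ C, ∑ i ∈ range k, #(Q ∩ (P i ∩ R i)) * c i := by
  rw [sum_comm]
  refine sum_le_sum fun i hi => ?_
  have hik := mem_range.1 hi
  rw [← sum_mul]
  refine mul_le_mul_of_nonneg_right ?_ (hc i hik)
  exact_mod_cast card_le_sum_card_inter fun x hx =>
    hCcov x (hRF i hik.le (inter_subset_right hx))

theorem sum_card_inter_mul_le_mul_harmonic (hRsucc : ∀ i < k, R (i + 1) = R i \ P i)
    {Q : Finset α} {c : ℕ → ℝ} {W : ℝ} (hW : 0 ≤ W) (hc : ∀ i < k, c i * #(Q ∩ R i) ≤ W) :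
    ∑ i ∈ range k, #(Q ∩ (P i ∩ R i)) * c i ≤ W * harmonic #Q := by
  have hsplit : ∀ i < k, #(Q ∩ R (i + 1)) + #(Q ∩ (P i ∩ R i)) = #(Q ∩ R i) := fun i hi => by
    rw [hRsucc i hi, card_inter_sdiff_add_card_inter_inter]
  calc ∑ i ∈ range k, (#(Q ∩ (P i ∩ R i)) : ℝ) * c i
      = ∑ i ∈ range k, ((#(Q ∩ R i) : ℝ) - #(Q ∩ R (i + 1))) * c i :=
        sum_congr rfl fun i hi => by
          rw [← hsplit i (mem_range.1 hi)]; push_cast; ring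
    _ ≤ W * harmonic #(Q ∩ R 0) :=
        sum_sub_mul_le_mul_harmonic hW (fun i hi => by have := hsplit i hi; omega) hc
    _ ≤ W * harmonic #Q := by
        gcongr
        exact_mod_cast harmonic_mono (card_le_card inter_subset_left)

end GreedyRun

theorem greedy_setcover_harmonic_approx_general
    {α : Type*} [DecidableEq α]
    (F : Finset α)
    (𝒮 : Finset (Finset α))
    (w : Finset α → ℝ) (hw : ∀ Q ∈ 𝒮, 0 < w Q)
    (k : ℕ) (P : ℕ → Finset α) (R : ℕ → Finset α)
    (hP : ∀ i < k, P i ∈ 𝒮)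
    (hR0 : R 0 = F)
    (hRsucc : ∀ i < k, R (i + 1) = R i \ P i)
    (hPmeets : ∀ i < k, (P i ∩ R i).Nonempty)
    (hgreedy : ∀ i < k, ∀ Q ∈ 𝒮, (Q ∩ R i).Nonempty →
      w (P i) / ((P i ∩ R i).card : ℝ) ≤ w Q / ((Q ∩ R i).card : ℝ))
    (C : Finset (Finset α)) (hC : C ⊆ 𝒮)
    (hCcov : ∀ f ∈ F, ∃ Q ∈ C, f ∈ Q)
    (p : ℕ) (hp : p = 𝒮.sup Finset.card) :
    ∑ i ∈ Finset.range k, w (P i) ≤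
      (∑ j ∈ Finset.range p, (1 : ℝ) / (j + 1)) * ∑ Q ∈ C, w Q := by
  set c : ℕ → ℝ := fun i => w (P i) / #(P i ∩ R i)
  have hweight : ∀ i < k, w (P i) = #(P i ∩ R i) * c i := fun i hi => by
    have : (0 : ℝ) < #(P i ∩ R i) := by exact_mod_cast card_pos.2 (hPmeets i hi)
    simp only [c]; field_simp
  have hc : ∀ i < k, 0 ≤ c i := fun i hi => div_nonneg (hw _ (hP i hi)).le (Nat.cast_nonneg _)
  have hcharge : ∀ Q ∈ C, ∀ i < k, c i * #(Q ∩ R i) ≤ w Q := fun Q hQ i hi => by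
    rcases (Q ∩ R i).eq_empty_or_nonempty with hQR | hQR
    · simpa [hQR] using (hw Q (hC hQ)).le
    · have : (0 : ℝ) < #(Q ∩ R i) := by exact_mod_cast card_pos.2 hQR
      exact (le_div_iff₀ this).1 (hgreedy i hi Q (hC hQ) hQR)
  have hH : ∑ j ∈ range p, (1 : ℝ) / (j + 1) = harmonic p := by simp [harmonic]
  calc ∑ i ∈ range k, w (P i) = ∑ i ∈ range k, #(P i ∩ R i) * c i :=
        sum_congr rfl fun i hi => hweight i (mem_range.1 hi)
    _ ≤ ∑ Q ∈ C, ∑ i ∈ range k, #(Q ∩ (P i ∩ R i)) * c i :=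
        sum_card_inter_mul_le_sum_sum (uncovered_subset_universe hR0 hRsucc) hCcov hc
    _ ≤ ∑ Q ∈ C, harmonic p * w Q := sum_le_sum fun Q hQ => by
        have hwQ := (hw Q (hC hQ)).le
        refine (sum_card_inter_mul_le_mul_harmonic hRsucc hwQ (hcharge Q hQ)).trans ?_
        rw [mul_comm]
        gcongr
        exact harmonic_mono (hp ▸ le_sup (hC hQ))
    _ = (∑ j ∈ range p, (1 : ℝ) / (j + 1)) * ∑ Q ∈ C, w Q := by rw [hH, mul_sum]

/-- Greedy weighted set cover is an `H(p)`-approximation, where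
`p = max_{P ∈ 𝒮} |P|` and `H(p) = ∑_{j=1}^p 1/j`.

`F` is a finite nonempty universe, `𝒮` a finite family of subsets of `F`
whose union is `F`, `w` a positive weight function on the sets of `𝒮`.
The greedy algorithm selects `P 0, …, P (k-1)` in order: `R i` is the set of
still uncovered elements (`R 0 = F`, `R (i+1) = R i \ P i`), and at each step
the chosen set minimizes `w(P)/|P ∩ R|` among sets `Q ∈ 𝒮` meeting `R`;
after the `k` steps everything is covered (`R k = ∅`).  Then for every
subfamily `C ⊆ 𝒮` whose union is `F`, the total greedy weight is at most
`H(p)` times the total weight of `C`. -/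
theorem greedy_setcover_harmonic_approx
    {α : Type*} [DecidableEq α]
    (F : Finset α) (hF : F.Nonempty)
    (𝒮 : Finset (Finset α))
    (h𝒮sub : ∀ Q ∈ 𝒮, Q ⊆ F)
    (h𝒮cov : ∀ f ∈ F, ∃ Q ∈ 𝒮, f ∈ Q)
    (w : Finset α → ℝ) (hw : ∀ Q ∈ 𝒮, 0 < w Q)
    (k : ℕ) (P : ℕ → Finset α) (R : ℕ → Finset α)
    (hP : ∀ i < k, P i ∈ 𝒮)
    (hR0 : R 0 = F)
    (hRsucc : ∀ i < k, R (i + 1) = R i \ P i)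
    (hPmeets : ∀ i < k, (P i ∩ R i).Nonempty)
    (hgreedy : ∀ i < k, ∀ Q ∈ 𝒮, (Q ∩ R i).Nonempty →
      w (P i) / ((P i ∩ R i).card : ℝ) ≤ w Q / ((Q ∩ R i).card : ℝ))
    (hdone : R k = ∅)
    (C : Finset (Finset α)) (hC : C ⊆ 𝒮)
    (hCcov : ∀ f ∈ F, ∃ Q ∈ C, f ∈ Q)
    (p : ℕ) (hp : p = 𝒮.sup Finset.card) :
    ∑ i ∈ Finset.range k, w (P i) ≤
      (∑ j ∈ Finset.range p, (1 : ℝ) / (j + 1)) * ∑ Q ∈ C, w Q :=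
  greedy_setcover_harmonic_approx_general F 𝒮 w hw k P R hP hR0 hRsucc hPmeets hgreedy C hC hCcov p
    hp
end

section
/- Let the greedy algorithm select sets P₁, …, P_k covering the universe F, with prices c_f := w(P_i)/|P_i ∩ R_i| for each element f first covered at step i. Fix any set P ∈ 𝒮 with |P| = d, and list its elements f₁, …, f_d in the order in which the greedy algorithm covers them (f_i covered no later than f_j whenever i ≤ j). Then for each j, the price of f_j satisfies c_{f_j} ≤ w(P)/(d − j + 1). Consequently Σ_{f ∈ P} c_f ≤ Σ_{j=1}^{d} w(P)/(d − j + 1) = H(d) · w(P). -/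
/-!
Let `f` be the `j`-th element of `P₀` in covering order, first covered at step `i`. The elements
of `P₀` that come after `f` are covered no earlier than `f`, so all `d - j` of them are still
uncovered at step `i`. Greedy chose `P i` although `P₀` was available, hence the price of `f` is at
most `w P₀ / |P₀ ∩ R i| ≤ w P₀ / (d - j)`. Summing over `j` and reversing the order of summation
gives the harmonic bound.
-/

open Finset

section GreedyRun

variable {α : Type*} [DecidableEq α] {k : ℕ} {P R : ℕ → Finset α}

theorem uncovered_subset_of_le (hRsucc : ∀ i < k, R (i + 1) = R i \ P i) {m n : ℕ}
    (hmn : m ≤ n) (hnk : n ≤ k) : R n ⊆ R m := by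
  induction n, hmn using Nat.le_induction with
  | base => exact subset_rfl
  | succ n _ ih =>
    rw [hRsucc n (by omega)]
    exact sdiff_subset.trans (ih (by omega))

theorem greedy_price_le_div_of_le_card {𝒮 : Finset (Finset α)} {w : Finset α → ℝ}
    (hgreedy : ∀ i < k, ∀ Q ∈ 𝒮, (Q ∩ R i).Nonempty →
      w (P i) / ((P i ∩ R i).card : ℝ) ≤ w Q / ((Q ∩ R i).card : ℝ))
    {i : ℕ} (hi : i < k) {Q : Finset α} (hQ : Q ∈ 𝒮) (hwQ : 0 ≤ w Q) {m : ℕ} (hm : 0 < m)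
    (hmQ : m ≤ (Q ∩ R i).card) :
    w (P i) / ((P i ∩ R i).card : ℝ) ≤ w Q / m := by
  have hQR : (Q ∩ R i).Nonempty := card_pos.mp (hm.trans_le hmQ)
  calc w (P i) / ((P i ∩ R i).card : ℝ) ≤ w Q / ((Q ∩ R i).card : ℝ) := hgreedy i hi Q hQ hQR
    _ ≤ w Q / m := div_le_div_of_nonneg_left hwQ (by exact_mod_cast hm) (by exact_mod_cast hmQ)

end GreedyRun

theorem Fin.sub_le_card_of_forall_le_mem {α : Type*} {d : ℕ} {g : Fin d → α}
    (hg : Function.Injective g) {s : Finset α} (j : Fin d) (hs : ∀ t, j ≤ t → g t ∈ s) :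
    d - j ≤ s.card :=
  Fin.card_Ici j ▸ card_le_card_of_injOn g (fun t ht ↦ hs t (mem_Ici.mp ht)) hg.injOn

theorem Finset.sum_eq_sum_fin_of_injective {α M : Type*} [AddCommMonoid M] [DecidableEq α]
    {s : Finset α} {d : ℕ} {g : Fin d → α} (hmem : ∀ j, g j ∈ s) (hg : Function.Injective g)
    (hcard : s.card = d) (f : α → M) :
    ∑ x ∈ s, f x = ∑ j, f (g j) := by
  have himage : univ.image g = s :=
    eq_of_subset_of_card_le (by simpa [subset_iff] using hmem)
      (by rw [card_image_of_injective _ hg, card_univ, Fintype.card_fin, hcard])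
  rw [← himage, sum_image fun a _ b _ h ↦ hg h]

theorem Fin.sum_div_sub_eq_harmonic_mul (d : ℕ) (a : ℝ) :
    ∑ j : Fin d, a / ((d - (j : ℕ) : ℕ) : ℝ) = (∑ j ∈ range d, (1 : ℝ) / (j + 1)) * a := by
  rw [Fin.sum_univ_eq_sum_range (fun j ↦ a / ((d - j : ℕ) : ℝ)), sum_mul,
    ← sum_range_reflect]
  refine sum_congr rfl fun j hj ↦ ?_
  have hsub : ((d - (d - 1 - j) : ℕ) : ℝ) = j + 1 := by
    have := mem_range.mp hj
    norm_cast
    omega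
  rw [hsub, div_eq_inv_mul, one_div]

theorem greedy_setcover_price_bound_in_set_general
    {α : Type*} [DecidableEq α]
    (F : Finset α)
    (𝒮 : Finset (Finset α))
    (h𝒮sub : ∀ Q ∈ 𝒮, Q ⊆ F)
    (w : Finset α → ℝ) (hw : ∀ Q ∈ 𝒮, 0 < w Q)
    (k : ℕ) (P : ℕ → Finset α) (R : ℕ → Finset α)
    (hRsucc : ∀ i < k, R (i + 1) = R i \ P i)
    (hgreedy : ∀ i < k, ∀ Q ∈ 𝒮, (Q ∩ R i).Nonempty →
      w (P i) / ((P i ∩ R i).card : ℝ) ≤ w Q / ((Q ∩ R i).card : ℝ))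
    (step : α → ℕ)
    (hstep : ∀ f ∈ F, step f < k ∧ f ∈ P (step f) ∧ f ∈ R (step f))
    (c : α → ℝ)
    (hc : ∀ f ∈ F,
      c f = w (P (step f)) / ((P (step f) ∩ R (step f)).card : ℝ))
    (P₀ : Finset α) (hP₀ : P₀ ∈ 𝒮)
    (d : ℕ) (hd : P₀.card = d)
    (fl : Fin d → α)
    (hfl_mem : ∀ j, fl j ∈ P₀)
    (hfl_inj : Function.Injective fl)
    (hfl_mono : ∀ i j : Fin d, i ≤ j → step (fl i) ≤ step (fl j)) :
    (∀ j : Fin d, c (fl j) ≤ w P₀ / ((d - (j : ℕ) : ℕ) : ℝ)) ∧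
      ∑ f ∈ P₀, c f ≤ (∑ j ∈ Finset.range d, (1 : ℝ) / (j + 1)) * w P₀ := by
  have hflF (j : Fin d) : fl j ∈ F := h𝒮sub P₀ hP₀ (hfl_mem j)
  have hprice (j : Fin d) : c (fl j) ≤ w P₀ / ((d - (j : ℕ) : ℕ) : ℝ) := by
    obtain ⟨hj_lt, -, -⟩ := hstep _ (hflF j)
    rw [hc _ (hflF j)]
    refine greedy_price_le_div_of_le_card hgreedy hj_lt hP₀ (hw P₀ hP₀).le
      (Nat.sub_pos_of_lt j.isLt) (Fin.sub_le_card_of_forall_le_mem hfl_inj j fun t hjt ↦ ?_)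
    obtain ⟨ht_lt, -, ht_uncovered⟩ := hstep _ (hflF t)
    exact mem_inter.mpr ⟨hfl_mem t,
      uncovered_subset_of_le hRsucc (hfl_mono j t hjt) ht_lt.le ht_uncovered⟩
  refine ⟨hprice, ?_⟩
  calc ∑ f ∈ P₀, c f = ∑ j, c (fl j) := sum_eq_sum_fin_of_injective hfl_mem hfl_inj hd c
    _ ≤ ∑ j : Fin d, w P₀ / ((d - (j : ℕ) : ℕ) : ℝ) := sum_le_sum fun j _ ↦ hprice j
    _ = _ := Fin.sum_div_sub_eq_harmonic_mul d (w P₀)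

/-- Price bound inside a single set for greedy weighted set cover.
The greedy algorithm selects `P 0, …, P (k-1)` (uncovered sets `R 0 = F`,
`R (i+1) = R i \ P i`, `R k = ∅`).  Each element `f ∈ F` is first covered at
step `step f` (so `f ∈ P (step f) ∩ R (step f)`) and is assigned the price
`c f = w (P (step f)) / |P (step f) ∩ R (step f)|`.  Fix `P₀ ∈ 𝒮` with
`|P₀| = d`, and list its elements `fl 0, …, fl (d-1)` in the order in which
greedy covers them.  Then the price of the `j`-th element (0-indexed, so the
1-indexed bound `w(P₀)/(d - j + 1)` becomes `w(P₀)/(d - j)`) satisfies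
`c (fl j) ≤ w P₀ / (d - j)`, and consequently
`∑_{f ∈ P₀} c f ≤ H(d) · w(P₀)` with `H(d) = ∑_{j=1}^d 1/j`. -/
theorem greedy_setcover_price_bound_in_set
    {α : Type*} [DecidableEq α]
    (F : Finset α) (hF : F.Nonempty)
    (𝒮 : Finset (Finset α))
    (h𝒮sub : ∀ Q ∈ 𝒮, Q ⊆ F)
    (h𝒮cov : ∀ f ∈ F, ∃ Q ∈ 𝒮, f ∈ Q)
    (w : Finset α → ℝ) (hw : ∀ Q ∈ 𝒮, 0 < w Q)
    (k : ℕ) (P : ℕ → Finset α) (R : ℕ → Finset α)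
    (hP : ∀ i < k, P i ∈ 𝒮)
    (hR0 : R 0 = F)
    (hRsucc : ∀ i < k, R (i + 1) = R i \ P i)
    (hPmeets : ∀ i < k, (P i ∩ R i).Nonempty)
    (hgreedy : ∀ i < k, ∀ Q ∈ 𝒮, (Q ∩ R i).Nonempty →
      w (P i) / ((P i ∩ R i).card : ℝ) ≤ w Q / ((Q ∩ R i).card : ℝ))
    (hdone : R k = ∅)
    (step : α → ℕ)
    (hstep : ∀ f ∈ F, step f < k ∧ f ∈ P (step f) ∧ f ∈ R (step f))
    (c : α → ℝ)
    (hc : ∀ f ∈ F,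
      c f = w (P (step f)) / ((P (step f) ∩ R (step f)).card : ℝ))
    (P₀ : Finset α) (hP₀ : P₀ ∈ 𝒮)
    (d : ℕ) (hd : P₀.card = d)
    (fl : Fin d → α)
    (hfl_mem : ∀ j, fl j ∈ P₀)
    (hfl_inj : Function.Injective fl)
    (hfl_mono : ∀ i j : Fin d, i ≤ j → step (fl i) ≤ step (fl j)) :
    (∀ j : Fin d, c (fl j) ≤ w P₀ / ((d - (j : ℕ) : ℕ) : ℝ)) ∧
      ∑ f ∈ P₀, c f ≤ (∑ j ∈ Finset.range d, (1 : ℝ) / (j + 1)) * w P₀ :=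
  greedy_setcover_price_bound_in_set_general F 𝒮 h𝒮sub w hw k P R hRsucc hgreedy step hstep c hc P₀
    hP₀ d hd fl hfl_mem hfl_inj hfl_mono
end

section
/- Suppose the greedy algorithm selects sets P₁, …, P_k covering the finite universe F, and the element prices c_f (f ∈ F) are nonnegative reals satisfying both (i) Σ_{i=1}^{k} w(P_i) = Σ_{f ∈ F} c_f, and (ii) Σ_{f ∈ P} c_f ≤ H(p) · w(P) for every P ∈ 𝒮, where p = max_{P ∈ 𝒮} |P|. Then for every subfamily C* ⊆ 𝒮 covering F, Σ_{P ∈ C*} w(P) ≥ (1/H(p)) · Σ_{i=1}^{k} w(P_i). -/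
/-! Charging argument: the greedy cost is the total price of `F`. Every element of `F` lies in
some set of the cover `C`, and prices are nonnegative, so the total price is at most the sum over
`Q ∈ C` of the price of `Q`, which by (ii) is at most `H(p) · w Q`. -/

open Finset

theorem Finset.sum_biUnion_le_sum_sum {ι α M : Type*} [DecidableEq α] [AddCommMonoid M]
    [PartialOrder M] [IsOrderedAddMonoid M] (C : Finset ι) (t : ι → Finset α) {c : α → M}
    (hc : ∀ i ∈ C, ∀ x ∈ t i, 0 ≤ c x) :
    ∑ x ∈ C.biUnion t, c x ≤ ∑ i ∈ C, ∑ x ∈ t i, c x := by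
  classical
  induction C using Finset.induction_on with
  | empty => simp
  | insert i C hi ih =>
    have hC : ∑ x ∈ C.biUnion t, c x ≤ ∑ j ∈ C, ∑ x ∈ t j, c x :=
      ih fun j hj => hc j (mem_insert_of_mem hj)
    have hinter : 0 ≤ ∑ x ∈ t i ∩ C.biUnion t, c x :=
      sum_nonneg fun x hx => hc i (mem_insert_self i C) x (mem_of_mem_inter_left hx)
    rw [biUnion_insert, sum_insert hi]
    calc ∑ x ∈ t i ∪ C.biUnion t, c x
        ≤ ∑ x ∈ t i ∪ C.biUnion t, c x + ∑ x ∈ t i ∩ C.biUnion t, c x :=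
          le_add_of_nonneg_right hinter
      _ = ∑ x ∈ t i, c x + ∑ x ∈ C.biUnion t, c x := sum_union_inter
      _ ≤ ∑ x ∈ t i, c x + ∑ j ∈ C, ∑ x ∈ t j, c x := add_le_add_right hC _

theorem Finset.sum_le_sum_sum_of_forall_exists_mem {ι α M : Type*} [AddCommMonoid M]
    [PartialOrder M] [IsOrderedAddMonoid M] {s : Finset α} (C : Finset ι) (t : ι → Finset α)
    {c : α → M} (hs : ∀ x ∈ s, ∃ i ∈ C, x ∈ t i) (hc : ∀ i ∈ C, ∀ x ∈ t i, 0 ≤ c x) :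
    ∑ x ∈ s, c x ≤ ∑ i ∈ C, ∑ x ∈ t i, c x := by
  classical
  have hsub : s ⊆ C.biUnion t := fun x hx => mem_biUnion.mpr (hs x hx)
  calc ∑ x ∈ s, c x ≤ ∑ x ∈ C.biUnion t, c x :=
        sum_le_sum_of_subset_of_nonneg hsub fun x hx _ => by
          obtain ⟨i, hi, hxi⟩ := mem_biUnion.mp hx
          exact hc i hi x hxi
    _ ≤ ∑ i ∈ C, ∑ x ∈ t i, c x := sum_biUnion_le_sum_sum C t hc

theorem sum_price_le_mul_sum_weight_of_cover {α : Type*} {F : Finset α}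
    {𝒮 C : Finset (Finset α)} (h𝒮sub : ∀ Q ∈ 𝒮, Q ⊆ F) (hC : C ⊆ 𝒮)
    (hCcov : ∀ f ∈ F, ∃ Q ∈ C, f ∈ Q) {w : Finset α → ℝ} {c : α → ℝ}
    (hc : ∀ f ∈ F, 0 ≤ c f) {H : ℝ} (hprice : ∀ Q ∈ 𝒮, ∑ f ∈ Q, c f ≤ H * w Q) :
    ∑ f ∈ F, c f ≤ H * ∑ Q ∈ C, w Q :=
  calc ∑ f ∈ F, c f ≤ ∑ Q ∈ C, ∑ f ∈ Q, c f :=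
        sum_le_sum_sum_of_forall_exists_mem C id hCcov fun Q hQ f hf =>
          hc f (h𝒮sub Q (hC hQ) hf)
    _ ≤ ∑ Q ∈ C, H * w Q := sum_le_sum fun Q hQ => hprice Q (hC hQ)
    _ = H * ∑ Q ∈ C, w Q := (mul_sum C w H).symm

theorem greedy_setcover_optimal_lower_bound_general
    {α : Type*}
    (F : Finset α)
    (𝒮 : Finset (Finset α))
    (h𝒮sub : ∀ Q ∈ 𝒮, Q ⊆ F)
    (w : Finset α → ℝ) (hw : ∀ Q ∈ 𝒮, 0 < w Q)
    (k : ℕ) (P : ℕ → Finset α)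
    (p : ℕ)
    (c : α → ℝ) (hc : ∀ f ∈ F, 0 ≤ c f)
    (hi : ∑ i ∈ Finset.range k, w (P i) = ∑ f ∈ F, c f)
    (hii : ∀ Q ∈ 𝒮,
      ∑ f ∈ Q, c f ≤ (∑ j ∈ Finset.range p, (1 : ℝ) / (j + 1)) * w Q)
    (C : Finset (Finset α)) (hC : C ⊆ 𝒮)
    (hCcov : ∀ f ∈ F, ∃ Q ∈ C, f ∈ Q) :
    ∑ Q ∈ C, w Q ≥
      (1 / ∑ j ∈ Finset.range p, (1 : ℝ) / (j + 1)) *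
        ∑ i ∈ Finset.range k, w (P i) := by
  set H : ℝ := ∑ j ∈ Finset.range p, (1 : ℝ) / (j + 1)
  have hH : 0 ≤ H := sum_nonneg fun j _ => by positivity
  have hCw : 0 ≤ ∑ Q ∈ C, w Q := sum_nonneg fun Q hQ => (hw Q (hC hQ)).le
  have hgreedy : ∑ i ∈ range k, w (P i) ≤ H * ∑ Q ∈ C, w Q :=
    hi ▸ sum_price_le_mul_sum_weight_of_cover h𝒮sub hC hCcov hc hii
  -- `hCw` covers the junk case `H = 0`, where `1 / H = 0`.
  rw [ge_iff_le, one_div_mul_eq_div]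
  exact div_le_of_le_mul₀ hH hCw (by rwa [mul_comm])

/-- Combining the two key facts of the greedy set cover analysis:
suppose the greedy algorithm selects sets `P 0, …, P (k-1)` from `𝒮` covering
the finite universe `F`, and the element prices `c f` are nonnegative reals
satisfying (i) `∑_{i<k} w (P i) = ∑_{f ∈ F} c f` and
(ii) `∑_{f ∈ Q} c f ≤ H(p) · w Q` for every `Q ∈ 𝒮`, where
`p = max_{Q ∈ 𝒮} |Q|` and `H(p) = ∑_{j=1}^p 1/j`.  Then for every subfamily
`C ⊆ 𝒮` covering `F`,
`∑_{Q ∈ C} w Q ≥ (1/H(p)) · ∑_{i<k} w (P i)`. -/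
theorem greedy_setcover_optimal_lower_bound
    {α : Type*} [DecidableEq α]
    (F : Finset α) (hF : F.Nonempty)
    (𝒮 : Finset (Finset α))
    (h𝒮sub : ∀ Q ∈ 𝒮, Q ⊆ F)
    (h𝒮cov : ∀ f ∈ F, ∃ Q ∈ 𝒮, f ∈ Q)
    (w : Finset α → ℝ) (hw : ∀ Q ∈ 𝒮, 0 < w Q)
    (k : ℕ) (P : ℕ → Finset α)
    (hP : ∀ i < k, P i ∈ 𝒮)
    (hPcov : ∀ f ∈ F, ∃ i < k, f ∈ P i)
    (p : ℕ) (hp : p = 𝒮.sup Finset.card)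
    (c : α → ℝ) (hc : ∀ f ∈ F, 0 ≤ c f)
    (hi : ∑ i ∈ Finset.range k, w (P i) = ∑ f ∈ F, c f)
    (hii : ∀ Q ∈ 𝒮,
      ∑ f ∈ Q, c f ≤ (∑ j ∈ Finset.range p, (1 : ℝ) / (j + 1)) * w Q)
    (C : Finset (Finset α)) (hC : C ⊆ 𝒮)
    (hCcov : ∀ f ∈ F, ∃ Q ∈ C, f ∈ Q) :
    ∑ Q ∈ C, w Q ≥
      (1 / ∑ j ∈ Finset.range p, (1 : ℝ) / (j + 1)) *
        ∑ i ∈ Finset.range k, w (P i) :=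
  greedy_setcover_optimal_lower_bound_general F 𝒮 h𝒮sub w hw k P p c hc hi hii C hC hCcov
end
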